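/- For all final segments X, Y of A*, Min(XY) = Min(X)·Min(Y), where Min(Z) denotes the set of minimal elements of Z with respect to the Higman ordering. -/
import Mathlib


/-- The Higman (subword) ordering on words over an ordered alphabet `A`. -/
def Hig {A : Type*} [PartialOrder A] (u v : List A) : Prop :=
  List.SublistForall₂ (· ≤ ·) u v

/-- Elementwise concatenation of languages. -/
def conc {A : Type*} (X Y : Set (List A)) : Set (List A) :=
  Set.image2 (· ++ ·) X Y

/-- A final segment (upward closed set) of `A*` for the Higman ordering. -/
def IsFinal {A : Type*} [PartialOrder A] (F : Set (List A)) : Prop :=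
  ∀ ⦃a b : List A⦄, Hig a b → a ∈ F → b ∈ F

/-- Upward closure of a set of words. -/
def upset {A : Type*} [PartialOrder A] (X : Set (List A)) : Set (List A) :=
  {b | ∃ a ∈ X, Hig a b}

/-- The set of minimal elements of a set of words. -/
def minSet {A : Type*} [PartialOrder A] (X : Set (List A)) : Set (List A) :=
  {x | x ∈ X ∧ ∀ y ∈ X, Hig y x → y = x}

/-- An antichain of words for the Higman ordering. -/
def IsAnti {A : Type*} [PartialOrder A] (U : Set (List A)) : Prop :=
  ∀ x ∈ U, ∀ y ∈ U, x ≠ y → ¬ Hig x y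

section Aux

variable {A : Type*} [PartialOrder A]

lemma hig_refl (u : List A) : Hig u u :=
  List.sublistForall₂_iff.2 ⟨u, List.forall₂_refl u, List.Sublist.refl u⟩

lemma hig_of_sublist {u v : List A} (h : List.Sublist u v) : Hig u v :=
  List.sublistForall₂_iff.2 ⟨u, List.forall₂_refl u, h⟩

lemma hig_trans {u v w : List A} (h1 : Hig u v) (h2 : Hig v w) : Hig u w :=
  trans_of (List.SublistForall₂ (α := A) (· ≤ ·)) h1 h2

lemma hig_length {u v : List A} (h : Hig u v) : u.length ≤ v.length := by
  obtain ⟨l, hf, hs⟩ := List.sublistForall₂_iff.1 h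
  calc u.length = l.length := hf.length_eq
    _ ≤ v.length := hs.length_le

lemma hig_append {u v x y : List A} (h1 : Hig u x) (h2 : Hig v y) :
    Hig (u ++ v) (x ++ y) := by
  obtain ⟨l, hf, hs⟩ := List.sublistForall₂_iff.1 h1
  obtain ⟨m, hg, ht⟩ := List.sublistForall₂_iff.1 h2
  exact List.sublistForall₂_iff.2 ⟨l ++ m, List.rel_append hf hg, hs.append ht⟩

lemma hig_append_split {u v w : List A} (h : Hig (u ++ v) w) :
    ∃ p q, w = p ++ q ∧ Hig u p ∧ Hig v q := by
  obtain ⟨l, hf, hs⟩ := List.sublistForall₂_iff.1 h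
  have hfu : List.Forall₂ (· ≤ ·) u (l.take u.length) := by
    have := List.forall₂_take u.length hf
    rwa [List.take_left] at this
  have hfv : List.Forall₂ (· ≤ ·) v (l.drop u.length) := by
    have := List.forall₂_drop u.length hf
    rwa [List.drop_left] at this
  have hl : List.Sublist (l.take u.length ++ l.drop u.length) w := by
    rw [List.take_append_drop]; exact hs
  obtain ⟨p, q, rfl, h1, h2⟩ := List.append_sublist_iff.1 hl
  exact ⟨p, q, rfl,
    List.sublistForall₂_iff.2 ⟨_, hfu, h1⟩,
    List.sublistForall₂_iff.2 ⟨_, hfv, h2⟩⟩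

end Aux

theorem stmt7 {A : Type*} [PartialOrder A] (X Y : Set (List A))
    (hX : IsFinal X) (hY : IsFinal Y) :
    minSet (conc X Y) = conc (minSet X) (minSet Y) := by
  ext w
  constructor
  · rintro ⟨⟨x, hx, y, hy, rfl⟩, hmin⟩
    refine ⟨x, ⟨hx, ?_⟩, y, ⟨hy, ?_⟩, rfl⟩
    · intro x' hx' hxx'
      have h := hmin (x' ++ y) ⟨x', hx', y, hy, rfl⟩ (hig_append hxx' (hig_refl y))
      exact List.append_cancel_right h
    · intro y' hy' hyy'
      have h := hmin (x ++ y') ⟨x, hx, y', hy', rfl⟩ (hig_append (hig_refl x) hyy')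
      exact List.append_cancel_left h
  · rintro ⟨x, ⟨hx, hxmin⟩, y, ⟨hy, hymin⟩, rfl⟩
    refine ⟨⟨x, hx, y, hy, rfl⟩, ?_⟩
    rintro w ⟨x', hx', y', hy', rfl⟩ hw
    obtain ⟨p, q, hpq, hup, hvq⟩ := hig_append_split hw
    rcases List.append_eq_append_iff.1 hpq.symm with ⟨a, ha, hq⟩ | ⟨c, hp, hc⟩
    · -- x = p ++ a, q = a ++ y
      have hx'x : Hig x' x := hig_trans hup (hig_of_sublist (ha ▸ List.sublist_append_left p a))
      have hx'eq : x' = x := hxmin x' hx' hx'x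
      have ha0 : a = [] := by
        have h1 : x.length ≤ p.length := hx'eq ▸ hig_length hup
        have h2 : x.length = p.length + a.length := by rw [ha, List.length_append]
        have : a.length = 0 := by omega
        exact List.length_eq_zero_iff.1 this
      subst ha0
      simp only [List.append_nil] at ha hq
      subst ha; subst hq
      rw [hx'eq, hymin y' hy' hvq]
    · -- p = x ++ c, y = c ++ q
      have hy'y : Hig y' y := hig_trans hvq (hig_of_sublist (hc ▸ List.sublist_append_right c q))
      have hy'eq : y' = y := hymin y' hy' hy'y
      have hc0 : c = [] := by
        have h1 : y.length ≤ q.length := hy'eq ▸ hig_length hvq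
        have h2 : y.length = c.length + q.length := by rw [hc, List.length_append]
        have : c.length = 0 := by omega
        exact List.length_eq_zero_iff.1 this
      subst hc0
      simp only [List.nil_append, List.append_nil] at hp hc hup
      subst hp; subst hc
      rw [hy'eq, hxmin x' hx' hup]
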